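/- arXiv:1704.06252 — 2 statements merged into one kernel-verified Lean document; each statement's English description precedes it below -/
import Mathlib

section
/- Let V₊ and V₋ be finite-dimensional complex vector spaces and u₊ : V₊ → V₊, u₋ : V₋ → V₋ linear endomorphisms such that tr(u₊ⁿ) − tr(u₋ⁿ) is a rational number for every n ≥ 1. Then the formal power series Z(t) := exp( Σ_{n ≥ 1} ( tr(u₊ⁿ) − tr(u₋ⁿ) ) tⁿ/n ) ∈ ℚ⟦t⟧ is rational, i.e. there exist polynomials p(t), q(t) ∈ ℚ[t] with q(t) ≠ 0 such that q(t)·Z(t) = p(t) in ℚ⟦t⟧. Moreover, if u₊ and u₋ are invertible, then p and q can be chosen with q(0) = p(0) = 1 and deg q(t) − deg p(t) = dim V₊ − dim V₋. -/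
/-- The exponential `exp f = Σ_{m ≥ 0} f^m / m!` of a formal power series `f`
(with zero constant term) over a `ℚ`-algebra, defined coefficientwise: since the
constant term of `f` is zero, only the terms with `m ≤ n` contribute to the
`n`-th coefficient. -/
noncomputable def PowerSeries.expOf {R : Type*} [CommRing R] [Algebra ℚ R]
    (f : PowerSeries R) : PowerSeries R :=
  PowerSeries.mk fun n =>
    ∑ m ∈ Finset.range (n + 1),
      algebraMap ℚ R (1 / m.factorial) * PowerSeries.coeff n (f ^ m)

/-!
Over `ℂ` the trace of `uⁿ` is the `n`-th power sum of the roots of the characteristic polynomial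
of `u`, and `exp (Σ_{n ≥ 1} aⁿ tⁿ / n) = (1 - a t)⁻¹` (both sides have the same constant term and
logarithmic derivative). Hence over `ℂ` we get `Q Z = P` with
`Q = ∏_{a ∈ Sp u₊} (1 - a t)` and `P = ∏_{b ∈ Sp u₋} (1 - b t)`. Since `Z` has rational
coefficients, a `ℚ`-linear form `φ : ℂ → ℚ` with `φ 1 = 1`, applied coefficientwise, turns this
into `q Z = p` over `ℚ` with `q(0) = p(0) = 1`. Finally `q P = p Q`, so
`deg q - deg p = deg Q - deg P`, which is `dim V₊ - dim V₋` when no eigenvalue vanishes.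
-/

open PowerSeries

namespace PowerSeries

variable {R : Type*} [CommRing R] [Algebra ℚ R]

lemma expOf_eq_subst_exp {f : R⟦X⟧} (hf : constantCoeff f = 0) :
    expOf f = (exp R).subst f := by
  ext n
  rw [coeff_subst' (HasSubst.of_constantCoeff_zero' hf), expOf, coeff_mk,
    finsum_eq_sum_of_support_subset (s := Finset.range (n + 1))]
  · simp [smul_eq_mul]
  · intro m hm
    by_contra hmn
    simp only [Finset.coe_range, Set.mem_Iio, not_lt, Nat.succ_le_iff] at hmn
    have hcoeff : coeff n (f ^ m) = 0 := coeff_of_lt_order _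
      ((Nat.cast_lt.mpr hmn).trans_le (le_order_pow_of_constantCoeff_eq_zero m hf))
    exact hm (by simp only [hcoeff, smul_zero])

lemma derivative_expOf {f : R⟦X⟧} (hf : constantCoeff f = 0) :
    d⁄dX R (expOf f) = d⁄dX R f * expOf f := by
  rw [expOf_eq_subst_exp hf, derivative_subst (HasSubst.of_constantCoeff_zero' hf),
    derivative_exp, mul_comm]

@[simp]
lemma constantCoeff_expOf (f : R⟦X⟧) : constantCoeff (expOf f) = 1 := by
  rw [← coeff_zero_eq_constantCoeff_apply, expOf, coeff_mk]
  simp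

lemma map_expOf {S : Type*} [CommRing S] [Algebra ℚ S] (φ : R →+* S) (f : R⟦X⟧) :
    map φ (expOf f) = expOf (map φ f) := by
  ext n
  simp [expOf, coeff_map, ← map_pow, RingHom.map_rat_algebraMap]

variable [IsAddTorsionFree R]

lemma mul_expOf_neg_eq_one {f h : R⟦X⟧} (hf : constantCoeff f = 0)
    (hd : d⁄dX R h = d⁄dX R f * h) (h0 : constantCoeff h = 1) : h * expOf (-f) = 1 := by
  refine derivative.ext ?_ (by simp [h0])
  rw [Derivation.leibniz, derivative_expOf (by simpa using hf), hd, map_neg,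
    Derivation.map_one_eq_zero, smul_eq_mul, smul_eq_mul]
  ring

lemma eq_expOf_of_derivative_eq_mul {f h : R⟦X⟧} (hf : constantCoeff f = 0)
    (hd : d⁄dX R h = d⁄dX R f * h) (h0 : constantCoeff h = 1) : h = expOf f := by
  have hinv : expOf f * expOf (-f) = 1 :=
    mul_expOf_neg_eq_one hf (derivative_expOf hf) (constantCoeff_expOf f)
  calc h = h * (expOf f * expOf (-f)) := by rw [hinv, mul_one]
    _ = (h * expOf (-f)) * expOf f := by ring
    _ = expOf f := by rw [mul_expOf_neg_eq_one hf hd h0, one_mul]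

@[simp]
lemma expOf_zero : expOf (0 : R⟦X⟧) = 1 :=
  (eq_expOf_of_derivative_eq_mul (by simp) (by simp) (by simp)).symm

lemma expOf_add {f g : R⟦X⟧} (hf : constantCoeff f = 0) (hg : constantCoeff g = 0) :
    expOf (f + g) = expOf f * expOf g := by
  refine (eq_expOf_of_derivative_eq_mul (by simp [hf, hg]) ?_ (by simp)).symm
  rw [Derivation.leibniz, derivative_expOf hf, derivative_expOf hg, map_add, smul_eq_mul,
    smul_eq_mul]
  ring

end PowerSeries

namespace Polynomial

variable {R : Type*} [CommRing R]

noncomputable def prodOneSubCMulX (s : Multiset R) : R[X] :=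
  (s.map fun a => 1 - C a * X).prod

lemma coeff_zero_prodOneSubCMulX (s : Multiset R) : (prodOneSubCMulX s).coeff 0 = 1 := by
  simp [prodOneSubCMulX, coeff_zero_multiset_prod]

lemma natDegree_prodOneSubCMulX [IsDomain R] {s : Multiset R} (hs : 0 ∉ s) :
    (prodOneSubCMulX s).natDegree = Multiset.card s := by
  have hlin : ∀ a ∈ s, (1 - C a * X).natDegree = 1 := fun a ha => by
    rw [show (1 - C a * X : R[X]) = C (-a) * X + C 1 by simp; ring]
    exact natDegree_linear (neg_ne_zero.mpr (ne_of_mem_of_not_mem ha hs))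
  have hne : (0 : R[X]) ∉ s.map fun a => 1 - C a * X := by
    simpa [Multiset.mem_map] using fun a _ h => by simpa using congrArg (coeff · 0) h
  rw [prodOneSubCMulX, natDegree_multiset_prod _ hne, Multiset.map_map,
    Multiset.map_congr (f := natDegree ∘ fun a => 1 - C a * X) (g := fun _ => 1) rfl hlin,
    Multiset.map_const', Multiset.sum_replicate, smul_eq_mul, mul_one]

end Polynomial

namespace PowerSeries

variable {K : Type*} [Field K]

/-- The series of `-log ∏_{a ∈ s} (1 - a X)`; its constant coefficient vanishes because
division by `0` is `0`. -/
noncomputable def powerSumSeries (s : Multiset K) : K⟦X⟧ :=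
  mk fun n => (s.map (· ^ n)).sum / n

@[simp]
lemma constantCoeff_powerSumSeries (s : Multiset K) : constantCoeff (powerSumSeries s) = 0 := by
  rw [← coeff_zero_eq_constantCoeff_apply, powerSumSeries, coeff_mk, Nat.cast_zero, div_zero]

@[simp]
lemma powerSumSeries_zero : powerSumSeries (0 : Multiset K) = 0 := by
  ext n
  simp [powerSumSeries]

lemma powerSumSeries_cons (a : K) (s : Multiset K) :
    powerSumSeries (a ::ₘ s) = powerSumSeries {a} + powerSumSeries s := by
  ext n
  simp [powerSumSeries, add_div]

variable [CharZero K]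

lemma derivative_powerSumSeries_singleton (a : K) :
    d⁄dX K (powerSumSeries {a}) = C a * rescale a (mk 1) := by
  ext n
  rw [coeff_derivative, powerSumSeries, coeff_mk, coeff_C_mul, coeff_rescale, coeff_mk]
  have : (n + 1 : K) ≠ 0 := n.cast_add_one_ne_zero
  simp only [Multiset.map_singleton, Multiset.sum_singleton, Nat.cast_add_one, Pi.one_apply]
  field_simp
  ring

lemma one_sub_C_mul_X_mul_expOf_powerSumSeries_singleton (a : K) :
    (1 - C a * X) * expOf (powerSumSeries {a}) = 1 := by
  have hgeom : rescale a (mk 1) * (1 - C a * X) = 1 := by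
    rw [← rescale_X, ← map_one (rescale a), ← map_sub, ← map_mul, mk_one_mul_one_sub_eq_one]
  simpa using mul_expOf_neg_eq_one (f := -powerSumSeries {a}) (by simp) (by
    rw [map_neg, derivative_powerSumSeries_singleton, neg_mul, mul_assoc, hgeom, mul_one,
      map_sub, Derivation.map_one_eq_zero, Derivation.leibniz, derivative_X, derivative_C]
    simp) (by simp)

lemma prodOneSubCMulX_mul_expOf_powerSumSeries (s : Multiset K) :
    (Polynomial.prodOneSubCMulX s : K⟦X⟧) * expOf (powerSumSeries s) = 1 := by
  induction s using Multiset.induction with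
  | empty => simp [Polynomial.prodOneSubCMulX]
  | cons a s ih =>
    rw [Polynomial.prodOneSubCMulX, Multiset.map_cons, Multiset.prod_cons,
      ← Polynomial.prodOneSubCMulX, powerSumSeries_cons, expOf_add (by simp) (by simp),
      Polynomial.coe_mul]
    calc ((1 - Polynomial.C a * Polynomial.X : Polynomial K) : K⟦X⟧) *
          (Polynomial.prodOneSubCMulX s : K⟦X⟧) *
          (expOf (powerSumSeries {a}) * expOf (powerSumSeries s))
        = ((1 - C a * X) * expOf (powerSumSeries {a})) *
            ((Polynomial.prodOneSubCMulX s : K⟦X⟧) * expOf (powerSumSeries s)) := by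
          simp only [Polynomial.coe_sub, Polynomial.coe_one, Polynomial.coe_mul,
            Polynomial.coe_C, Polynomial.coe_X]
          ring
      _ = 1 := by rw [one_sub_C_mul_X_mul_expOf_powerSumSeries_singleton, ih, one_mul]

lemma prodOneSubCMulX_mul_expOf_sub (s t : Multiset K) :
    (Polynomial.prodOneSubCMulX s : K⟦X⟧) * expOf (powerSumSeries s - powerSumSeries t) =
      Polynomial.prodOneSubCMulX t := by
  have hsplit : expOf (powerSumSeries s - powerSumSeries t) * expOf (powerSumSeries t) =
      expOf (powerSumSeries s) := by
    rw [← expOf_add (by simp) (by simp), sub_add_cancel]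
  calc (Polynomial.prodOneSubCMulX s : K⟦X⟧) * expOf (powerSumSeries s - powerSumSeries t)
      = (Polynomial.prodOneSubCMulX s : K⟦X⟧) * expOf (powerSumSeries s - powerSumSeries t) *
          ((Polynomial.prodOneSubCMulX t : K⟦X⟧) * expOf (powerSumSeries t)) := by
        rw [prodOneSubCMulX_mul_expOf_powerSumSeries, mul_one]
    _ = Polynomial.prodOneSubCMulX t *
          ((Polynomial.prodOneSubCMulX s : K⟦X⟧) * expOf (powerSumSeries s)) := by
        rw [← hsplit]
        ring
    _ = Polynomial.prodOneSubCMulX t := by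
        rw [prodOneSubCMulX_mul_expOf_powerSumSeries, mul_one]

end PowerSeries

namespace Polynomial

section Descent

variable {K L : Type*} [CommSemiring K] [Semiring L] [Algebra K L]

noncomputable def mapLinear (φ : L →ₗ[K] K) (P : L[X]) : K[X] :=
  ∑ n ∈ P.support, monomial n (φ (P.coeff n))

@[simp]
lemma coeff_mapLinear (φ : L →ₗ[K] K) (P : L[X]) (n : ℕ) :
    (mapLinear φ P).coeff n = φ (P.coeff n) := by
  by_cases hn : n ∈ P.support
  · simp [mapLinear, coeff_monomial, hn]
  · simp_all [mapLinear, coeff_monomial]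

/-- Works because `φ (P_i * z) = φ (P_i) * z` for `z ∈ K`. -/
lemma coe_mapLinear_mul_of_coe_mul {φ : L →ₗ[K] K} {P R : L[X]} {Z : K⟦X⟧}
    (h : (P : L⟦X⟧) * PowerSeries.map (algebraMap K L) Z = R) :
    (mapLinear φ P : K⟦X⟧) * Z = mapLinear φ R := by
  ext n
  rw [coeff_coe, coeff_mapLinear, ← coeff_coe, ← h, PowerSeries.coeff_mul,
    PowerSeries.coeff_mul, map_sum]
  refine Finset.sum_congr rfl fun ij _ => ?_
  rw [coeff_coe, coeff_coe, coeff_mapLinear, PowerSeries.coeff_map, ← Algebra.commutes,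
    ← Algebra.smul_def, map_smul, smul_eq_mul, mul_comm]

end Descent

lemma natDegree_sub_natDegree_eq_of_coe_mul {K L : Type*} [CommSemiring K] [CommSemiring L]
    [NoZeroDivisors L] [Algebra K L] [FaithfulSMul K L]
    {q p : K[X]} {Q P : L[X]} {Z : K⟦X⟧} (hp : p ≠ 0) (hP : P ≠ 0)
    (hqZ : (q : K⟦X⟧) * Z = p) (hQZ : (Q : L⟦X⟧) * PowerSeries.map (algebraMap K L) Z = P) :
    (q.natDegree : ℤ) - p.natDegree = (Q.natDegree : ℤ) - P.natDegree := by
  have hinj := FaithfulSMul.algebraMap_injective K L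
  have hq : q ≠ 0 := by
    rintro rfl
    exact hp (coe_eq_zero_iff.mp (by rw [← hqZ, coe_zero, zero_mul]))
  have hQ : Q ≠ 0 := by
    rintro rfl
    exact hP (coe_eq_zero_iff.mp (by rw [← hQZ, coe_zero, zero_mul]))
  have hcross : q.map (algebraMap K L) * P = Q * p.map (algebraMap K L) := by
    rw [← coe_inj, coe_mul, coe_mul, polynomial_map_coe, polynomial_map_coe, ← hQZ, ← hqZ,
      map_mul]
    ring
  have hdeg := congrArg natDegree hcross
  rw [natDegree_mul ((Polynomial.map_ne_zero_iff hinj).mpr hq) hP,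
    natDegree_mul hQ ((Polynomial.map_ne_zero_iff hinj).mpr hp), natDegree_map_eq_of_injective hinj,
    natDegree_map_eq_of_injective hinj] at hdeg
  omega

end Polynomial

namespace Module.End

open LinearMap (trace)

variable {K V : Type*} [Field K] [AddCommGroup V] [Module K V] [FiniteDimensional K V]

lemma trace_pow_eq_of_isNilpotent_sub_algebraMap {u : End K V} {μ : K}
    (hu : IsNilpotent (u - algebraMap K (End K V) μ)) (n : ℕ) :
    trace K V (u ^ n) = finrank K V * μ ^ n := by
  induction n with
  | zero => simp
  | succ n ih =>
    rw [pow_succ, mul_eq_comp,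
      LinearMap.trace_comp_eq_mul_of_commute_of_isNilpotent μ ((Commute.refl u).pow_left n) hu,
      ih]
    ring

lemma zero_notMem_roots_charpoly {u : End K V} (hu : IsUnit u) : 0 ∉ u.charpoly.roots := by
  intro h0
  have hroot := (Polynomial.mem_roots'.mp h0).2
  obtain ⟨v, hv⟩ := ((hasEigenvalue_iff_isRoot_charpoly u 0).mpr hroot).exists_hasEigenvector
  exact hv.2 (((isUnit_iff u).mp hu).injective (by simpa using hv.apply_eq_smul))

variable [IsAlgClosed K]

lemma card_roots_charpoly (u : End K V) : Multiset.card u.charpoly.roots = finrank K V := by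
  rw [IsAlgClosed.card_roots_eq_natDegree, LinearMap.charpoly_natDegree]

/-- Each generalized eigenspace contributes `rootMultiplicity μ • μⁿ`. -/
lemma trace_pow_eq_sum_roots_charpoly (u : End K V) (n : ℕ) :
    trace K V (u ^ n) = (u.charpoly.roots.map (· ^ n)).sum := by
  classical
  have hroots : {μ | u.maxGenEigenspace μ ≠ ⊥} = u.charpoly.roots.toFinset := by
    ext μ
    simp [← Submodule.finrank_eq_zero, LinearMap.finrank_maxGenEigenspace_eq,
      ← Polynomial.count_roots]
  have hfin : {μ | u.maxGenEigenspace μ ≠ ⊥}.Finite := hroots ▸ Finset.finite_toSet _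
  have hint : DirectSum.IsInternal u.maxGenEigenspace :=
    DirectSum.isInternal_submodule_of_iSupIndep_of_iSup_eq_top
      u.independent_maxGenEigenspace u.iSup_maxGenEigenspace_eq_top
  have hmaps (μ : K) := mapsTo_maxGenEigenspace_of_comm ((Commute.refl u).pow_right n) μ
  rw [LinearMap.trace_eq_sum_trace_restrict' hint hfin hmaps, Finset.sum_multiset_map_count]
  refine Finset.sum_congr (by ext; simp only [Set.Finite.mem_toFinset, hroots, Finset.mem_coe])
    fun μ _ => ?_
  rw [← pow_restrict n (mapsTo_maxGenEigenspace_of_comm (Commute.refl u) μ),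
    trace_pow_eq_of_isNilpotent_sub_algebraMap
      (u.isNilpotent_restrict_maxGenEigenspace_sub_algebraMap μ),
    LinearMap.finrank_maxGenEigenspace_eq, Polynomial.count_roots, nsmul_eq_mul]

end Module.End

open Polynomial Module.End

/-- Let `up`, `um` be endomorphisms of finite-dimensional complex vector spaces whose
trace differences `tr upⁿ - tr umⁿ` are rational, given by `c n` for `n ≥ 1`. Then the
power series `Z(t) = exp (Σ_{n ≥ 1} c n tⁿ/n) ∈ ℚ⟦t⟧` is rational; moreover, when `up`
and `um` are invertible, the polynomials `p`, `q` with `q * Z = p` can be chosen with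
`p(0) = q(0) = 1` and `deg q - deg p = dim Vp - dim Vm`. -/
theorem zeta_of_endomorphism_rational
    (Vp Vm : Type*) [AddCommGroup Vp] [Module ℂ Vp] [FiniteDimensional ℂ Vp]
    [AddCommGroup Vm] [Module ℂ Vm] [FiniteDimensional ℂ Vm]
    (up : Vp →ₗ[ℂ] Vp) (um : Vm →ₗ[ℂ] Vm)
    (c : ℕ → ℚ)
    (hc : ∀ n : ℕ, 1 ≤ n →
      (c n : ℂ) = LinearMap.trace ℂ Vp (up ^ n) - LinearMap.trace ℂ Vm (um ^ n)) :
    (∃ p q : Polynomial ℚ, q ≠ 0 ∧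
        q * PowerSeries.expOf (PowerSeries.mk fun n => if n = 0 then 0 else c n / n) = p) ∧
      ((IsUnit up ∧ IsUnit um) →
        ∃ p q : Polynomial ℚ, p.coeff 0 = 1 ∧ q.coeff 0 = 1 ∧
          q * PowerSeries.expOf (PowerSeries.mk fun n => if n = 0 then 0 else c n / n) = p ∧
          (q.natDegree : ℤ) - p.natDegree =
            (Module.finrank ℂ Vp : ℤ) - Module.finrank ℂ Vm) := by
  set sp := up.charpoly.roots
  set sm := um.charpoly.roots
  have hlog : PowerSeries.map (algebraMap ℚ ℂ)
      (PowerSeries.mk fun n => if n = 0 then 0 else c n / n) =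
        powerSumSeries sp - powerSumSeries sm := by
    ext n
    rcases Nat.eq_zero_or_pos n with rfl | hn
    · simp
    · simp [powerSumSeries, hn.ne', hc n hn, trace_pow_eq_sum_roots_charpoly, sub_div, sp, sm]
  have hQP : (prodOneSubCMulX sp : ℂ⟦X⟧) * PowerSeries.map (algebraMap ℚ ℂ)
      (PowerSeries.expOf (PowerSeries.mk fun n => if n = 0 then 0 else c n / n)) =
        prodOneSubCMulX sm := by
    rw [map_expOf, hlog, prodOneSubCMulX_mul_expOf_sub]
  obtain ⟨φ, hφ⟩ := Module.Projective.exists_dual_eq_one ℚ (one_ne_zero : (1 : ℂ) ≠ 0)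
  have h0 (s : Multiset ℂ) : (mapLinear φ (prodOneSubCMulX s)).coeff 0 = 1 := by
    rw [coeff_mapLinear, coeff_zero_prodOneSubCMulX, hφ]
  have hqZ := coe_mapLinear_mul_of_coe_mul (φ := φ) hQP
  refine ⟨⟨_, _, fun h => by simpa [h] using h0 sp, hqZ⟩,
    fun ⟨hup, hum⟩ => ⟨_, _, h0 sm, h0 sp, hqZ, ?_⟩⟩
  rw [natDegree_sub_natDegree_eq_of_coe_mul (fun h => by simpa [h] using h0 sm)
      (fun h => by simpa [h] using coeff_zero_prodOneSubCMulX sm) hqZ hQP,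
    natDegree_prodOneSubCMulX (zero_notMem_roots_charpoly hup),
    natDegree_prodOneSubCMulX (zero_notMem_roots_charpoly hum),
    card_roots_charpoly, card_roots_charpoly]
end

section
/- Let F be a field, V₊ and V₋ finite-dimensional F-vector spaces of dimensions n₊ and n₋, and u₊ : V₊ → V₊, u₋ : V₋ → V₋ invertible linear endomorphisms. Consider the rational function Z(t) := det(id − t·u₋) / det(id − t·u₊) in the field F(t) of rational functions. Then the functional equation det(id − t⁻¹·u₋⁻¹) / det(id − t⁻¹·u₊⁻¹) = (−t)^{n₊ − n₋} · ( det(u₊) / det(u₋) ) · Z(t) holds in F(t); in other words, substituting u± ↦ u±⁻¹ and t ↦ t⁻¹ multiplies Z(t) by (−t)^{n₊ − n₋} · det(u₊)/det(u₋). -/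
/-!
If `v u = 1` then `1 - t⁻¹ v = (-t⁻¹) v (1 - t u)`, so taking determinants gives
`det (1 - t⁻¹ v) = (-t)^(-n) (det u)⁻¹ det (1 - t u)` in `F(t)`. Dividing this identity for
`u₋` by the one for `u₊` gives the functional equation.
-/

/-- The reverse characteristic polynomial `det (id - t • u)` of an endomorphism `u`
of a finite-dimensional vector space `V`, a polynomial with constant term `1`. -/
noncomputable def revCharPoly {F V : Type*} [Field F] [AddCommGroup V] [Module F V]
    [FiniteDimensional F V] (u : V →ₗ[F] V) : Polynomial F :=
  Matrix.det (1 - (Polynomial.X : Polynomial F) •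
    (LinearMap.toMatrix (Module.finBasis F V) (Module.finBasis F V) u).map Polynomial.C)

open Polynomial

namespace Matrix

variable {n : Type*} [Fintype n] [DecidableEq n]

theorem aeval_charpolyRev {R A : Type*} [CommRing R] [CommRing A] [Algebra R A]
    (M : Matrix n n R) (x : A) :
    aeval x M.charpolyRev = det (1 - x • M.map (algebraMap R A)) := by
  rw [charpolyRev, AlgHom.map_det, AlgHom.mapMatrix_apply]
  congr 1
  ext i j
  by_cases hij : i = j <;> simp [hij, mul_comm (algebraMap R A _)]

theorem det_one_sub_inv_smul_of_mul_eq_one {K : Type*} [Field K] {N M : Matrix n n K}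
    (h : N * M = 1) {x : K} (hx : x ≠ 0) :
    det (1 - x⁻¹ • N) = (-x⁻¹) ^ Fintype.card n * det N * det (1 - x • M) := by
  have factor : 1 - x⁻¹ • N = (-x⁻¹) • (N * (1 - x • M)) := by
    rw [mul_sub, mul_one, mul_smul_comm, h, smul_sub, smul_smul, neg_mul, inv_mul_cancel₀ hx,
      neg_one_smul, neg_smul, sub_neg_eq_add, neg_add_eq_sub]
  rw [factor, det_smul, det_mul, mul_assoc]

end Matrix

theorem revCharPoly_eq_charpolyRev {F V : Type*} [Field F] [AddCommGroup V] [Module F V]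
    [FiniteDimensional F V] (u : V →ₗ[F] V) :
    revCharPoly u =
      (LinearMap.toMatrix (Module.finBasis F V) (Module.finBasis F V) u).charpolyRev :=
  rfl

theorem aeval_inv_revCharPoly_of_comp_eq_id {F K V : Type*} [Field F] [Field K] [Algebra F K]
    [AddCommGroup V] [Module F V] [FiniteDimensional F V] {u v : V →ₗ[F] V}
    (h : v ∘ₗ u = LinearMap.id) {x : K} (hx : x ≠ 0) :
    aeval x⁻¹ (revCharPoly v) =
      ((-x) ^ Module.finrank F V * algebraMap F K (LinearMap.det u))⁻¹ *
        aeval x (revCharPoly u) := by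
  set b := Module.finBasis F V
  have hmul : (LinearMap.toMatrix b b v).map (algebraMap F K) *
      (LinearMap.toMatrix b b u).map (algebraMap F K) = 1 := by
    rw [← Matrix.map_mul, ← LinearMap.toMatrix_comp, h, LinearMap.toMatrix_id,
      Matrix.map_one _ (map_zero _) (map_one _)]
  have hdet : LinearMap.det v = (LinearMap.det u)⁻¹ := by
    refine eq_inv_of_mul_eq_one_left ?_
    rw [← LinearMap.det_comp, h, LinearMap.det_id]
  rw [revCharPoly_eq_charpolyRev, revCharPoly_eq_charpolyRev, Matrix.aeval_charpolyRev,
    Matrix.aeval_charpolyRev, Matrix.det_one_sub_inv_smul_of_mul_eq_one hmul hx,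
    ← RingHom.mapMatrix_apply, ← RingHom.map_det, LinearMap.det_toMatrix, hdet,
    Fintype.card_fin, map_inv₀, neg_inv, inv_pow, mul_inv]

/-- Functional equation: for invertible endomorphisms `up`, `um` (with inverses `vp`,
`vm`) of finite-dimensional `F`-vector spaces of dimensions `n₊ = dim Vp`,
`n₋ = dim Vm`, substituting `t ↦ t⁻¹` and `u ↦ u⁻¹` in
`Z(t) = det (id - t·um) / det (id - t·up)` yields, in the rational function field
`F(t)`, the identity
`det (id - t⁻¹·um⁻¹) / det (id - t⁻¹·up⁻¹) = (-t)^(n₊ - n₋) · (det up / det um) · Z(t)`. -/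
theorem zeta_functional_equation
    (F : Type*) [Field F]
    (Vp Vm : Type*) [AddCommGroup Vp] [Module F Vp] [FiniteDimensional F Vp]
    [AddCommGroup Vm] [Module F Vm] [FiniteDimensional F Vm]
    (up vp : Vp →ₗ[F] Vp) (um vm : Vm →ₗ[F] Vm)
    (hp : up ∘ₗ vp = LinearMap.id ∧ vp ∘ₗ up = LinearMap.id)
    (hm : um ∘ₗ vm = LinearMap.id ∧ vm ∘ₗ um = LinearMap.id) :
    Polynomial.aeval ((RatFunc.X : RatFunc F)⁻¹) (revCharPoly vm) /
        Polynomial.aeval ((RatFunc.X : RatFunc F)⁻¹) (revCharPoly vp) =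
      (-(RatFunc.X : RatFunc F)) ^
          ((Module.finrank F Vp : ℤ) - (Module.finrank F Vm : ℤ)) *
        (algebraMap F (RatFunc F) (LinearMap.det up) /
          algebraMap F (RatFunc F) (LinearMap.det um)) *
        (algebraMap (Polynomial F) (RatFunc F) (revCharPoly um) /
          algebraMap (Polynomial F) (RatFunc F) (revCharPoly up)) := by
  have hX : -(RatFunc.X : RatFunc F) ≠ 0 := neg_ne_zero.2 RatFunc.X_ne_zero
  rw [aeval_inv_revCharPoly_of_comp_eq_id hm.2 RatFunc.X_ne_zero,
    aeval_inv_revCharPoly_of_comp_eq_id hp.2 RatFunc.X_ne_zero, mul_div_mul_comm,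
    inv_div_inv, mul_div_mul_comm, zpow_sub₀ hX, zpow_natCast, zpow_natCast,
    RatFunc.aeval_X_left_eq_algebraMap, RatFunc.aeval_X_left_eq_algebraMap]
end
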